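/- arXiv:1110.2225 — 9 statements merged into one kernel-verified Lean document; each statement's English description precedes it below -/
import Mathlib

section
/- Let av(n) = av_{t51}(n) where t51 = N(N(L,L,L),L,L). Then av(0) = 0, av(1) = 1, av(2) = 0, and for all n ≥ 3, av(n) = Σ_{k=1}^{n-2} av(k)·av(n-k-1). -/
inductive TTree : Type
  | L : TTree
  | N : TTree → TTree → TTree → TTree

namespace TTree

/-- `occursAtRoot t T` : the pattern `t` occurs at the root of `T`. -/
def occursAtRoot : TTree → TTree → Prop
  | .L, _ => True
  | .N _ _ _, .L => False
  | .N p q r, .N a b c => occursAtRoot p a ∧ occursAtRoot q b ∧ occursAtRoot r c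

/-- `contains t T` : the pattern `t` occurs at some vertex of `T`. -/
def contains (t : TTree) : TTree → Prop
  | .L => occursAtRoot t .L
  | .N a b c => occursAtRoot t (.N a b c) ∨ contains t a ∨ contains t b ∨ contains t c

/-- `T.avoids t` : the tree `T` avoids the pattern `t`. -/
def avoids (T t : TTree) : Prop := ¬ contains t T

/-- the number of leaves of a ternary tree -/
def leaves : TTree → ℕ
  | .L => 1
  | .N a b c => leaves a + leaves b + leaves c

end TTree

/-- `av t n` : the number of `n`-leaf ternary trees avoiding the pattern `t` -/
noncomputable def av (t : TTree) (n : ℕ) : ℕ :=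
  Set.ncard {T : TTree | T.leaves = n ∧ T.avoids t}

/-- the 5-leaf pattern `t51 = N(N(L,L,L),L,L)` -/
def t51 : TTree := .N (.N .L .L .L) .L .L

/-! A tree avoids `t51` exactly when it is a leaf or of the form `N(L, b, c)` with `b` and `c`
avoiding `t51`. So an `(m + 2)`-leaf avoider is determined by the leaf count `k ∈ [1, m]` of its
center subtree together with a `k`-leaf avoider and an `(m + 1 - k)`-leaf avoider, which gives the
convolution recurrence. -/

deriving instance DecidableEq for TTree

namespace TTree

theorem one_le_leaves (T : TTree) : 1 ≤ T.leaves := by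
  induction T with
  | L => rfl
  | N a b c ha _ _ => simp only [leaves]; omega

theorem L_avoids_t51 : L.avoids t51 := by
  simp [avoids, contains, occursAtRoot, t51]

theorem N_avoids_t51_iff (a b c : TTree) :
    (N a b c).avoids t51 ↔ a = L ∧ b.avoids t51 ∧ c.avoids t51 := by
  cases a <;> simp [avoids, contains, occursAtRoot, t51]

end TTree

open TTree

def t51Avoiders : ℕ → Finset TTree
  | 0 => ∅
  | 1 => {L}
  | n + 2 => (Finset.Icc 1 n).attach.biUnion fun k =>
      (t51Avoiders k ×ˢ t51Avoiders (n + 1 - k)).image fun p => N L p.1 p.2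
decreasing_by
  all_goals have := (Finset.mem_Icc.mp k.2).2; omega

theorem mem_t51Avoiders (n : ℕ) (T : TTree) :
    T ∈ t51Avoiders n ↔ T.leaves = n ∧ T.avoids t51 := by
  induction n using Nat.strong_induction_on generalizing T with
  | _ n ih =>
  match n, T with
  | 0, T => simpa [t51Avoiders] using fun h => absurd h (Nat.one_le_iff_ne_zero.mp (one_le_leaves T))
  | 1, L => simpa [t51Avoiders, leaves] using L_avoids_t51
  | 1, N a b c =>
    have := one_le_leaves a; have := one_le_leaves b; have := one_le_leaves c
    simp only [t51Avoiders, Finset.mem_singleton, reduceCtorEq, false_iff, leaves]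
    omega
  | m + 2, L => simp [t51Avoiders, leaves]
  | m + 2, N a b c =>
    simp only [t51Avoiders, Finset.mem_biUnion, Finset.mem_attach, Finset.mem_image,
      Finset.mem_product, true_and, Subtype.exists, Prod.exists, N.injEq, Finset.mem_Icc,
      N_avoids_t51_iff, leaves]
    constructor
    · rintro ⟨k, hk, b, c, ⟨hb, hc⟩, rfl, rfl, rfl⟩
      obtain ⟨hbk, hb⟩ := (ih k (by omega) b).mp hb
      obtain ⟨hck, hc⟩ := (ih (m + 1 - k) (by omega) c).mp hc
      exact ⟨by simp only [leaves]; omega, rfl, hb, hc⟩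
    · rintro ⟨hn, rfl, hb, hc⟩
      have := one_le_leaves b; have := one_le_leaves c
      simp only [leaves] at hn
      exact ⟨b.leaves, by omega, b, c, ⟨(ih _ (by omega) b).mpr ⟨rfl, hb⟩,
        (ih _ (by omega) c).mpr ⟨by omega, hc⟩⟩, rfl, rfl, rfl⟩

theorem av_t51_eq_card (n : ℕ) : av t51 n = (t51Avoiders n).card := by
  rw [av, ← Set.ncard_coe_finset]
  congr 1
  ext T
  simp [mem_t51Avoiders]

theorem av_t51_add_two (m : ℕ) :
    av t51 (m + 2) = ∑ k ∈ Finset.Icc 1 m, av t51 k * av t51 (m + 1 - k) := by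
  have hinj : Function.Injective fun p : TTree × TTree => N L p.1 p.2 := by
    rintro ⟨b, c⟩ ⟨b', c'⟩ h
    simpa using h
  have hdisj : Set.PairwiseDisjoint (↑(Finset.Icc 1 m).attach) fun k : Finset.Icc 1 m =>
      (t51Avoiders k ×ˢ t51Avoiders (m + 1 - k)).image fun p => N L p.1 p.2 := by
    intro k _ k' _ hkk'
    refine Finset.disjoint_left.mpr ?_
    simp only [Finset.mem_image, Finset.mem_product, Prod.exists]
    rintro _ ⟨b, c, ⟨hb, -⟩, rfl⟩ ⟨b', c', ⟨hb', -⟩, h⟩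
    cases h
    exact hkk' (Subtype.ext (((mem_t51Avoiders _ b).mp hb).1 ▸ ((mem_t51Avoiders _ b).mp hb').1))
  rw [av_t51_eq_card, t51Avoiders, Finset.card_biUnion hdisj,
    ← Finset.sum_attach (Finset.Icc 1 m)]
  refine Finset.sum_congr rfl fun k _ => ?_
  rw [Finset.card_image_of_injective _ hinj, Finset.card_product, av_t51_eq_card, av_t51_eq_card]

/-- Recurrence for the avoidance sequence of `t51`. -/
theorem av_t51_recurrence :
    av t51 0 = 0 ∧ av t51 1 = 1 ∧ av t51 2 = 0 ∧
    ∀ n : ℕ, 3 ≤ n →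
      av t51 n = ∑ k ∈ Finset.Icc 1 (n - 2), av t51 k * av t51 (n - k - 1) := by
  refine ⟨by simp [av_t51_eq_card, t51Avoiders], by simp [av_t51_eq_card, t51Avoiders],
    by simpa using av_t51_add_two 0, fun n hn => ?_⟩
  obtain ⟨m, rfl⟩ : ∃ m, n = m + 2 := ⟨n - 2, by omega⟩
  rw [av_t51_add_two, Nat.add_sub_cancel]
  refine Finset.sum_congr rfl fun k _ => ?_
  rw [show m + 2 - k - 1 = m + 1 - k by omega]
end

section
/- For the pattern t51 = N(N(L,L,L),L,L): for every n ≥ 0, av_{t51}(2n+1) equals the n-th Catalan number, and av_{t51}(2n) = 0. -/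
/-!
A ternary tree avoids `t51` exactly when the left child of every internal vertex is a leaf.
Forgetting those left leaves is a bijection onto binary trees, under which a tree with `n`
internal vertices has `2 n + 1` leaves; binary trees with `n` nodes are counted by `catalan n`.
Every ternary tree has an odd number of leaves, so the even terms vanish.
-/

namespace TTree

theorem odd_leaves (T : TTree) : Odd T.leaves := by
  induction T with
  | L => exact odd_one
  | N a b c iha ihb ihc => exact (iha.add_odd ihb).add_odd ihc

theorem avoids_N_iff {t a b c : TTree} :
    (N a b c).avoids t ↔ ¬ occursAtRoot t (N a b c) ∧ a.avoids t ∧ b.avoids t ∧ c.avoids t := by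
  simp only [avoids, contains, not_or]

theorem occursAtRoot_t51_N_iff {a b c : TTree} : occursAtRoot t51 (N a b c) ↔ a ≠ L := by
  cases a <;> simp [t51, occursAtRoot]

theorem avoids_t51_N_iff {a b c : TTree} :
    (N a b c).avoids t51 ↔ a = L ∧ b.avoids t51 ∧ c.avoids t51 := by
  rw [avoids_N_iff, occursAtRoot_t51_N_iff, not_not]
  constructor
  · rintro ⟨rfl, -, hb, hc⟩
    exact ⟨rfl, hb, hc⟩
  · rintro ⟨rfl, hb, hc⟩
    exact ⟨rfl, by simp [avoids, contains, t51, occursAtRoot], hb, hc⟩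

def ofBinaryTree : BinaryTree Unit → TTree
  | .nil => L
  | .node _ l r => N L (ofBinaryTree l) (ofBinaryTree r)

theorem leaves_ofBinaryTree (t : BinaryTree Unit) :
    (ofBinaryTree t).leaves = 2 * t.numNodes + 1 := by
  induction t with
  | nil => rfl
  | node _ l r ihl ihr =>
    simp only [ofBinaryTree, leaves, ihl, ihr, BinaryTree.numNodes]
    ring

theorem ofBinaryTree_injective : Function.Injective ofBinaryTree := by
  intro s t h
  induction s generalizing t with
  | nil => cases t <;> simp_all [ofBinaryTree]
  | node _ l r ihl ihr =>
    cases t with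
    | nil => simp [ofBinaryTree] at h
    | node _ l' r' =>
      simp only [ofBinaryTree, N.injEq, true_and] at h
      rw [ihl h.1, ihr h.2]

def ofBinaryTreeEmbedding : BinaryTree Unit ↪ TTree := ⟨ofBinaryTree, ofBinaryTree_injective⟩

theorem avoids_t51_iff_mem_range {T : TTree} : T.avoids t51 ↔ T ∈ Set.range ofBinaryTree := by
  induction T with
  | L => simpa [avoids, contains, t51, occursAtRoot] using ⟨.nil, rfl⟩
  | N a b c _ ihb ihc =>
    rw [avoids_t51_N_iff, ihb, ihc]
    constructor
    · rintro ⟨rfl, ⟨l, rfl⟩, ⟨r, rfl⟩⟩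
      exact ⟨.node () l r, rfl⟩
    · rintro ⟨_ | ⟨_, l, r⟩, h⟩
      · cases h
      · simp only [ofBinaryTree, N.injEq] at h
        obtain ⟨rfl, rfl, rfl⟩ := h
        exact ⟨rfl, ⟨l, rfl⟩, ⟨r, rfl⟩⟩

end TTree

open TTree

theorem setOf_avoids_t51_eq_map (n : ℕ) :
    {T : TTree | T.leaves = 2 * n + 1 ∧ T.avoids t51} =
      ((BinaryTree.treesOfNumNodesEq n).map ofBinaryTreeEmbedding : Set TTree) := by
  ext T
  simp only [Set.mem_ofPred_eq, avoids_t51_iff_mem_range, Finset.coe_map, Set.mem_image,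
    Finset.mem_coe, BinaryTree.mem_treesOfNumNodesEq, ofBinaryTreeEmbedding,
    Function.Embedding.coeFn_mk]
  constructor
  · rintro ⟨hT, t, rfl⟩
    rw [leaves_ofBinaryTree] at hT
    exact ⟨t, by omega, rfl⟩
  · rintro ⟨t, ht, rfl⟩
    exact ⟨by rw [leaves_ofBinaryTree, ht], t, rfl⟩

theorem av_t51_two_mul_add_one (n : ℕ) : av t51 (2 * n + 1) = catalan n := by
  rw [av, setOf_avoids_t51_eq_map, Set.ncard_coe_finset, Finset.card_map,
    BinaryTree.treesOfNumNodesEq_card_eq_catalan]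

theorem av_two_mul (t : TTree) (n : ℕ) : av t (2 * n) = 0 := by
  have hempty : {T : TTree | T.leaves = 2 * n ∧ T.avoids t} = ∅ :=
    Set.eq_empty_of_forall_notMem fun T ⟨hT, _⟩ =>
      Nat.not_odd_iff_even.mpr ⟨n, by omega⟩ (hT ▸ T.odd_leaves)
  rw [av, hempty, Set.ncard_empty]

/-- The odd-indexed terms of the avoidance sequence of `t51` are the Catalan
numbers and the even-indexed terms vanish. -/
theorem av_t51_catalan (n : ℕ) :
    av t51 (2 * n + 1) = catalan n ∧ av t51 (2 * n) = 0 :=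
  ⟨av_t51_two_mul_add_one n, av_two_mul t51 n⟩
end

section
/- For all n ≥ 0, av_{t51}(n) = av_{t52}(n), where t51 = N(N(L,L,L),L,L) and t52 = N(L,N(L,L,L),L). -/
/-- the 5-leaf pattern `t52 = N(L,N(L,L,L),L)` -/
def t52 : TTree := .N .L (.N .L .L .L) .L
/-!
Exchanging the left and centre children at every vertex is a leaf-preserving involution of ternary
trees, and a pattern `t` occurs at a vertex of `T` exactly when the mirrored pattern occurs at the
corresponding vertex of the mirrored tree. Hence `av t = av t.swap` for every pattern `t`, and
`t52` is the mirror image of `t51`.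
-/

namespace TTree

def swap : TTree → TTree
  | L => L
  | N a b c => N (swap b) (swap a) (swap c)

@[simp]
theorem swap_swap (T : TTree) : T.swap.swap = T := by
  induction T with
  | L => rfl
  | N a b c ha hb hc => simp only [swap, ha, hb, hc]

theorem swap_involutive : Function.Involutive swap := swap_swap

@[simp]
theorem leaves_swap (T : TTree) : T.swap.leaves = T.leaves := by
  induction T with
  | L => rfl
  | N a b c ha hb hc => simp only [swap, leaves, ha, hb, hc]; omega

theorem occursAtRoot_swap (t T : TTree) : occursAtRoot t.swap T.swap ↔ occursAtRoot t T := by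
  induction t generalizing T with
  | L => simp only [swap, occursAtRoot]
  | N p q r hp hq hr =>
    cases T with
    | L => simp only [swap, occursAtRoot]
    | N a b c => simp only [swap, occursAtRoot, hp, hq, hr]; tauto

theorem contains_swap (t T : TTree) : contains t.swap T.swap ↔ contains t T := by
  induction T with
  | L => exact occursAtRoot_swap t L
  | N a b c ha hb hc =>
    have hroot := occursAtRoot_swap t (N a b c)
    simp only [swap, contains] at hroot ⊢
    rw [hroot, ha, hb, hc]
    tauto

theorem avoids_swap (T t : TTree) : T.swap.avoids t.swap ↔ T.avoids t :=
  not_congr (contains_swap t T)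

end TTree

theorem av_swap (t : TTree) (n : ℕ) : av t.swap n = av t n := by
  have himage : {T : TTree | T.leaves = n ∧ T.avoids t.swap}
      = TTree.swap '' {T | T.leaves = n ∧ T.avoids t} := by
    ext T
    rw [TTree.swap_involutive.image_eq_preimage_symm]
    simp only [Set.mem_ofPred_eq, Set.mem_preimage, TTree.leaves_swap]
    rw [← TTree.avoids_swap, TTree.swap_swap]
  rw [av, av, himage, Set.ncard_image_of_injective _ TTree.swap_involutive.injective]

/-- The patterns `t51` and `t52` are Wilf equivalent. -/
theorem av_t51_eq_av_t52 (n : ℕ) : av t51 n = av t52 n :=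
  (av_swap t51 n).symm
end

section
/- For all n ≥ 0, av_{t71}(n) = av_{t72}(n), where t71 = N(N(L,L,L),N(L,L,L),L) and t72 = N(N(L,L,L),L,N(L,L,L)). -/
/-- the 7-leaf pattern `t71 = N(N(L,L,L),N(L,L,L),L)` -/
def t71 : TTree := .N (.N .L .L .L) (.N .L .L .L) .L

/-- the 7-leaf pattern `t72 = N(N(L,L,L),L,N(L,L,L))` -/
def t72 : TTree := .N (.N .L .L .L) .L (.N .L .L .L)

/-
The involution exchanging the center and right child at every vertex preserves the number of
leaves and commutes with pattern occurrence, so `t` and its image are Wilf equivalent; it maps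
`t72` to `t71`.
-/

namespace TTree

def swapCenterRight : TTree → TTree
  | .L => .L
  | .N a b c => .N (swapCenterRight a) (swapCenterRight c) (swapCenterRight b)

theorem swapCenterRight_involutive : Function.Involutive swapCenterRight := by
  intro T
  induction T with
  | L => rfl
  | N a b c ha hb hc => simp only [swapCenterRight, ha, hb, hc]

theorem leaves_swapCenterRight (T : TTree) : (swapCenterRight T).leaves = T.leaves := by
  induction T with
  | L => rfl
  | N a b c ha hb hc => simp only [swapCenterRight, leaves, ha, hb, hc]; omega

theorem occursAtRoot_swapCenterRight (t T : TTree) :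
    occursAtRoot (swapCenterRight t) (swapCenterRight T) ↔ occursAtRoot t T := by
  induction t generalizing T with
  | L => simp only [swapCenterRight, occursAtRoot]
  | N p q r hp hq hr =>
    cases T with
    | L => simp only [swapCenterRight, occursAtRoot]
    | N a b c => simp only [swapCenterRight, occursAtRoot, hp, hq, hr]; tauto

theorem contains_swapCenterRight (t T : TTree) :
    contains (swapCenterRight t) (swapCenterRight T) ↔ contains t T := by
  induction T with
  | L => exact occursAtRoot_swapCenterRight t .L
  | N a b c ha hb hc =>
    have hroot := occursAtRoot_swapCenterRight t (.N a b c)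
    simp only [swapCenterRight] at hroot
    simp only [swapCenterRight, contains, hroot, ha, hb, hc]
    tauto

theorem avoids_swapCenterRight_iff (T t : TTree) :
    T.avoids (swapCenterRight t) ↔ (swapCenterRight T).avoids t := by
  rw [avoids, avoids, ← contains_swapCenterRight t, swapCenterRight_involutive T]

end TTree

open TTree in
theorem av_swapCenterRight (t : TTree) (n : ℕ) : av (swapCenterRight t) n = av t n := by
  have hset : {T : TTree | T.leaves = n ∧ T.avoids (swapCenterRight t)}
      = swapCenterRight ⁻¹' {T | T.leaves = n ∧ T.avoids t} := by
    ext T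
    simp only [Set.mem_ofPred_eq, Set.mem_preimage, leaves_swapCenterRight,
      avoids_swapCenterRight_iff]
  rw [av, av, hset, Set.ncard_preimage_of_injective_subset_range
    swapCenterRight_involutive.injective (by simp [swapCenterRight_involutive.surjective.range_eq])]

/-- The patterns `t71` and `t72` are Wilf equivalent. -/
theorem av_t71_eq_av_t72 (n : ℕ) : av t71 n = av t72 n :=
  av_swapCenterRight t72 n
end

section
/- For every n ≥ 0, the number of (2n+1)-leaf ternary trees avoiding t72 = N(N(L,L,L),L,N(L,L,L)) equals Σ_B 2^{r(B)}, where the sum is over all (non-strict) binary trees B with exactly n vertices and r(B) is the number of vertices of B having a nonempty right subtree. (This is the count of n-vertex binary trees with each right edge colored in one of two colors, which equals the n-th little Schröder number.) -/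
/-- a (non-strict) binary tree: either empty, or a vertex with a
(possibly empty) left subtree and a (possibly empty) right subtree -/
inductive BTree : Type
  | nil : BTree
  | node : BTree → BTree → BTree

namespace BTree

/-- the number of vertices of a (non-strict) binary tree -/
def vertices : BTree → ℕ
  | .nil => 0
  | .node l r => 1 + vertices l + vertices r

/-- the number of vertices whose right subtree is nonempty
(equivalently, the number of right edges) -/
def rcount : BTree → ℕ
  | .nil => 0
  | .node l r => (match r with | .nil => 0 | .node _ _ => 1) + rcount l + rcount r

end BTree

/-!
A ternary tree avoids `t72` iff each internal vertex has a leaf as its left or its right child.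
Reading such a vertex `N L b c` as a binary vertex with subtrees coming from `b` and `c`, and
`N a b L` (with `a` internal) as one with subtrees coming from `b` and `a`, maps the avoiding trees
with `n` internal vertices, i.e. with `2n + 1` leaves, onto the binary trees with `n` vertices. The
two readings can only both apply at a vertex whose right subtree is nonempty, so the fibre over `B`
has `2 ^ r(B)` elements.
-/

deriving instance DecidableEq for TTree
deriving instance DecidableEq for BTree

namespace TTree

def nodes : TTree → ℕ
  | .L => 0
  | .N a b c => a.nodes + b.nodes + c.nodes + 1

theorem leaves_eq_two_mul_nodes_add_one (T : TTree) : T.leaves = 2 * T.nodes + 1 := by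
  induction T with
  | L => rfl
  | N a b c ha hb hc => simp only [leaves, nodes, ha, hb, hc]; ring

def EveryNodeHasOuterLeaf : TTree → Prop
  | .L => True
  | .N a b c => (a = .L ∨ c = .L) ∧ a.EveryNodeHasOuterLeaf ∧ b.EveryNodeHasOuterLeaf ∧
      c.EveryNodeHasOuterLeaf

theorem occursAtRoot_N_L_L_L_iff (T : TTree) : occursAtRoot (.N .L .L .L) T ↔ T ≠ .L := by
  cases T <;> simp [occursAtRoot]

theorem contains_t72_iff (T : TTree) : contains t72 T ↔ ¬ T.EveryNodeHasOuterLeaf := by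
  induction T with
  | L => simp [contains, occursAtRoot, t72, EveryNodeHasOuterLeaf]
  | N a b c ha hb hc =>
    simp only [contains, t72, occursAtRoot, occursAtRoot_N_L_L_L_iff, EveryNodeHasOuterLeaf,
      true_and]
    tauto

theorem avoids_t72_iff (T : TTree) : T.avoids t72 ↔ T.EveryNodeHasOuterLeaf := by
  rw [avoids, contains_t72_iff, not_not]

def shape : TTree → BTree
  | .L => .nil
  | .N a b c => if a = .L then .node b.shape c.shape else .node b.shape a.shape

theorem vertices_shape {T : TTree} (hT : T.EveryNodeHasOuterLeaf) :
    T.shape.vertices = T.nodes := by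
  induction T with
  | L => rfl
  | N a b c ha hb hc =>
    obtain ⟨hac, hTa, hTb, hTc⟩ := hT
    by_cases h : a = .L
    · subst h; simp only [shape, if_true, BTree.vertices, nodes, hb hTb, hc hTc]; omega
    · obtain rfl := hac.resolve_left h
      simp only [shape, h, if_false, BTree.vertices, nodes, ha hTa, hb hTb]; omega

theorem shape_eq_nil_iff {T : TTree} : T.shape = .nil ↔ T = .L := by
  cases T with
  | L => simp [shape]
  | N a b c => unfold shape; split_ifs <;> simp

end TTree

namespace BTree

open TTree

def lifts : BTree → Finset TTree
  | .nil => {.L}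
  | .node l r =>
    ((l.lifts ×ˢ r.lifts).image fun p => .N .L p.1 p.2) ∪
      if r = .nil then ∅ else (r.lifts ×ˢ l.lifts).image fun p => .N p.1 p.2 .L

theorem mem_lifts_shape {T : TTree} (hT : T.EveryNodeHasOuterLeaf) : T ∈ T.shape.lifts := by
  induction T with
  | L => simp [shape, lifts]
  | N a b c ha hb hc =>
    obtain ⟨hac, hTa, hTb, hTc⟩ := hT
    by_cases h : a = .L
    · subst h
      simp only [shape, if_true, lifts, Finset.mem_union, Finset.mem_image]
      exact Or.inl ⟨(b, c), Finset.mem_product.2 ⟨hb hTb, hc hTc⟩, rfl⟩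
    · obtain rfl := hac.resolve_left h
      simp only [shape, h, if_false, lifts, Finset.mem_union, shape_eq_nil_iff, if_false]
      exact Or.inr (Finset.mem_image.2 ⟨(a, b), Finset.mem_product.2 ⟨ha hTa, hb hTb⟩, rfl⟩)

theorem mem_lifts_iff {T : TTree} {B : BTree} :
    T ∈ B.lifts ↔ T.EveryNodeHasOuterLeaf ∧ T.shape = B := by
  refine ⟨fun hT => ?_, fun ⟨hT, hB⟩ => hB ▸ mem_lifts_shape hT⟩
  induction B generalizing T with
  | nil => obtain rfl := Finset.mem_singleton.1 hT; exact ⟨trivial, rfl⟩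
  | node l r hl hr =>
    simp only [lifts, Finset.mem_union, Finset.mem_image, Finset.mem_product] at hT
    rcases hT with ⟨⟨b, c⟩, ⟨hb, hc⟩, rfl⟩ | hT
    · obtain ⟨⟨hgb, rfl⟩, ⟨hgc, rfl⟩⟩ := And.intro (hl hb) (hr hc)
      exact ⟨⟨Or.inl rfl, trivial, hgb, hgc⟩, by simp [shape]⟩
    · split_ifs at hT with hrn
      · simp at hT
      obtain ⟨⟨a, b⟩, hab, rfl⟩ := Finset.mem_image.1 hT
      obtain ⟨ha, hb⟩ := Finset.mem_product.1 hab
      obtain ⟨⟨hga, rfl⟩, ⟨hgb, rfl⟩⟩ := And.intro (hr ha) (hl hb)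
      have ha_ne : a ≠ .L := fun h => hrn (shape_eq_nil_iff.2 h)
      exact ⟨⟨Or.inr rfl, hga, hgb, trivial⟩, by simp [shape, ha_ne]⟩

theorem pairwiseDisjoint_lifts (s : Set BTree) : s.PairwiseDisjoint lifts :=
  fun _ _ _ _ hne => Finset.disjoint_left.2 fun _ hT hT' =>
    hne ((mem_lifts_iff.1 hT).2.symm.trans (mem_lifts_iff.1 hT').2)

theorem card_lifts (B : BTree) : B.lifts.card = 2 ^ B.rcount := by
  induction B with
  | nil => rfl
  | node l r hl hr =>
    have hinj₁ : Function.Injective fun p : TTree × TTree => N L p.1 p.2 :=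
      fun p q h => by simpa [Prod.ext_iff] using h
    have hinj₂ : Function.Injective fun p : TTree × TTree => N p.1 p.2 L :=
      fun p q h => by simpa [Prod.ext_iff] using h
    cases r with
    | nil => simp [lifts, rcount, Finset.card_image_of_injective _ hinj₁, hl]
    | node rl rr =>
      have hdisj : Disjoint ((l.lifts ×ˢ (rl.node rr).lifts).image fun p => N L p.1 p.2)
          (((rl.node rr).lifts ×ˢ l.lifts).image fun p => N p.1 p.2 L) := by
        simp only [Finset.disjoint_left, Finset.mem_image, Finset.mem_product, not_exists,
          not_and]
        rintro _ ⟨⟨b, c⟩, -, rfl⟩ ⟨a, b'⟩ ⟨ha, -⟩ h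
        obtain rfl : a = .L := by simp_all
        simp [mem_lifts_iff, shape] at ha
      rw [lifts, if_neg nofun, Finset.card_union_of_disjoint hdisj,
        Finset.card_image_of_injective _ hinj₁, Finset.card_image_of_injective _ hinj₂,
        Finset.card_product, Finset.card_product, hl, hr, rcount]
      ring

theorem finite_setOf_vertices_le (n : ℕ) : {B : BTree | B.vertices ≤ n}.Finite := by
  induction n with
  | zero => exact (Set.finite_singleton nil).subset fun B hB => by cases B <;> simp_all [vertices]
  | succ n ih =>
    refine ((ih.image2 node ih).insert nil).subset fun B hB => ?_
    cases B with
    | nil => simp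
    | node l r =>
      simp only [vertices, Set.mem_ofPred_eq] at hB
      exact Or.inr ⟨l, (by omega : l.vertices ≤ n), r, (by omega : r.vertices ≤ n), rfl⟩

end BTree

open BTree TTree in
/-- The number of `(2n+1)`-leaf ternary trees avoiding `t72` equals
`Σ_B 2^{r(B)}` over all `n`-vertex (non-strict) binary trees `B`. -/
theorem av_t72_schroeder (n : ℕ) :
    av t72 (2 * n + 1) = ∑ᶠ B ∈ {B : BTree | B.vertices = n}, 2 ^ B.rcount := by
  have hfin : {B : BTree | B.vertices = n}.Finite :=
    (finite_setOf_vertices_le n).subset fun B hB => le_of_eq hB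
  have havoid : {T : TTree | T.leaves = 2 * n + 1 ∧ T.avoids t72} =
      ↑(hfin.toFinset.biUnion lifts) := by
    ext T
    simp only [Set.mem_ofPred_eq, Finset.coe_biUnion, Set.Finite.coe_toFinset, Set.mem_iUnion,
      Finset.mem_coe, mem_lifts_iff, exists_and_left, exists_prop, exists_eq_right',
      avoids_t72_iff, leaves_eq_two_mul_nodes_add_one]
    rw [and_comm]
    exact and_congr_right fun hT => by rw [vertices_shape hT]; omega
  rw [av, havoid, Set.ncard_coe_finset, Finset.card_biUnion (pairwiseDisjoint_lifts _),
    finsum_mem_eq_finite_toFinset_sum _ hfin]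
  exact Finset.sum_congr rfl fun B _ => card_lifts B
end

section
/- For all n ≥ 0, av_{t71}(n) = av_{t74}(n), where t71 = N(N(L,L,L),N(L,L,L),L) and t74 = N(N(L,N(L,L,L),L),L,L). -/
/-- the 7-leaf pattern `t74 = N(N(L,N(L,L,L),L),L,L)` -/
def t74 : TTree := .N (.N .L (.N .L .L .L) .L) .L .L


/-!
The trees are matched by the bijection `phi` with `phi (N L b c) = N L (phi b) (phi c)` and
`phi (N a b c) = N (N p (phi b) (phi c)) q r` when `phi a = N p q r`: the images of the middle and
right subtrees are grafted under the left child, whose own middle and right subtrees move up.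
So `t71` occurs at `N a b c` (left and middle children internal) iff `t74` occurs at its image
(middle child `phi b` of the left child internal), and `t74` occurs at the new left child
`N p (phi b) (phi c)` iff it occurs at `phi a = N p q r`, since both only test `p`. Hence `phi`
preserves leaves and maps the `t71`-avoiders onto the `t74`-avoiders.
-/

namespace TTree

def graft : TTree → TTree → TTree → TTree
  | L, b, c => N L b c
  | N p q r, b, c => N (N p b c) q r

def phi : TTree → TTree
  | L => L
  | N a b c => graft (phi a) (phi b) (phi c)

def psi : TTree → TTree
  | L => L
  | N L b c => N L (psi b) (psi c)
  | N (N p b c) q r => N (psi (N p q r)) (psi b) (psi c)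
termination_by T => sizeOf T
decreasing_by all_goals (simp; try omega)

lemma leaves_graft (a b c : TTree) :
    (graft a b c).leaves = a.leaves + b.leaves + c.leaves := by
  cases a <;> simp only [graft, leaves]; omega

lemma leaves_phi (T : TTree) : (phi T).leaves = T.leaves := by
  induction T with
  | L => rfl
  | N a b c iha ihb ihc => simp only [phi, leaves_graft, leaves, iha, ihb, ihc]

lemma phi_N_L (b c : TTree) : phi (N L b c) = N L (phi b) (phi c) := rfl

lemma phi_N_of_phi_eq {a p q r : TTree} (h : phi a = N p q r) (b c : TTree) :
    phi (N a b c) = N (N p (phi b) (phi c)) q r := by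
  rw [phi, h, graft]

lemma phi_eq_L_iff {T : TTree} : phi T = L ↔ T = L := by
  cases T with
  | L => simp [phi]
  | N a b c => rw [phi]; cases phi a <;> simp [graft]

lemma psi_phi (T : TTree) : psi (phi T) = T := by
  induction T with
  | L => rw [phi, psi]
  | N a b c iha ihb ihc =>
    cases ha : phi a with
    | L => rw [phi_eq_L_iff.mp ha, phi_N_L, psi, ihb, ihc]
    | N p q r => rw [phi_N_of_phi_eq ha, psi, ← ha, iha, ihb, ihc]

lemma phi_psi (T : TTree) : phi (psi T) = T := by
  induction T using psi.induct with
  | case1 => rw [psi, phi]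
  | case2 b c ihb ihc => rw [psi, phi_N_L, ihb, ihc]
  | case3 p b c q r ih ihb ihc => rw [psi, phi_N_of_phi_eq ih, ihb, ihc]

def phiEquiv : TTree ≃ TTree := ⟨phi, psi, psi_phi, phi_psi⟩

lemma occursAtRoot_node_iff {T : TTree} : occursAtRoot (N L L L) T ↔ T ≠ L := by
  cases T <;> simp [occursAtRoot]

lemma occursAtRoot_phi_node_iff {T : TTree} :
    occursAtRoot (N L L L) (phi T) ↔ occursAtRoot (N L L L) T := by
  rw [occursAtRoot_node_iff, occursAtRoot_node_iff, Ne, Ne, phi_eq_L_iff]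

lemma contains_N {t a b c : TTree} :
    contains t (N a b c) ↔ occursAtRoot t (N a b c) ∨ contains t a ∨ contains t b ∨ contains t c :=
  Iff.rfl

lemma not_contains_t71_L : ¬ contains t71 L := by simp [contains, occursAtRoot, t71]

lemma not_contains_t74_L : ¬ contains t74 L := by simp [contains, occursAtRoot, t74]

lemma occursAtRoot_t71_N {a b c : TTree} :
    occursAtRoot t71 (N a b c) ↔ occursAtRoot (N L L L) a ∧ occursAtRoot (N L L L) b := by
  simp [t71, occursAtRoot]

lemma occursAtRoot_t74_N {a b c : TTree} :
    occursAtRoot t74 (N a b c) ↔ occursAtRoot (N L (N L L L) L) a := by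
  simp [t74, occursAtRoot]

lemma contains_t71_iff_contains_t74_phi (T : TTree) :
    contains t71 T ↔ contains t74 (phi T) := by
  induction T with
  | L => simp only [phi, not_contains_t71_L, not_contains_t74_L]
  | N a b c iha ihb ihc =>
    cases ha : phi a with
    | L =>
      obtain rfl := phi_eq_L_iff.mp ha
      simp only [phi_N_L, contains_N, occursAtRoot_t71_N, occursAtRoot_t74_N, occursAtRoot,
        not_contains_t71_L, not_contains_t74_L, false_and, false_or, ihb, ihc]
    | N p q r =>
      have ha' : occursAtRoot (N L L L) a :=
        occursAtRoot_phi_node_iff.mp (ha ▸ ⟨trivial, trivial, trivial⟩)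
      rw [ha] at iha
      simp only [phi_N_of_phi_eq ha, contains_N, occursAtRoot_t71_N, occursAtRoot_t74_N,
        occursAtRoot, occursAtRoot_phi_node_iff, ha', true_and, and_true, iha, ihb, ihc]
      tauto

end TTree

open TTree

lemma av_eq_of_equiv {s t : TTree} (e : TTree ≃ TTree) (he : ∀ T, (e T).leaves = T.leaves)
    (h : ∀ T, T.avoids s ↔ (e T).avoids t) (n : ℕ) : av s n = av t n := by
  have himage : e '' {T | T.leaves = n ∧ T.avoids s} = {T | T.leaves = n ∧ T.avoids t} := by
    rw [e.image_eq_preimage_symm]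
    ext U
    rw [Set.mem_preimage, Set.mem_ofPred_eq, Set.mem_ofPred_eq, ← he, h, e.apply_symm_apply]
  rw [av, av, ← himage, Set.ncard_image_of_injective _ e.injective]

/-- The patterns `t71` and `t74` are Wilf equivalent. -/
theorem av_t71_eq_av_t74 (n : ℕ) : av t71 n = av t74 n :=
  av_eq_of_equiv phiEquiv leaves_phi
    (fun T => not_congr (contains_t71_iff_contains_t74_phi T)) n
end

section
/- For all n ≥ 0, av_{t74}(n) = av_{t75}(n), where t74 = N(N(L,N(L,L,L),L),L,L) and t75 = N(N(L,L,N(L,L,L)),L,L). -/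
/-- the 7-leaf pattern `t75 = N(N(L,L,N(L,L,L)),L,L)` -/
def t75 : TTree := .N (.N .L .L (.N .L .L .L)) .L .L

namespace TTree

def swapMidRight : TTree → TTree
  | .L => .L
  | .N a b c => .N (swapMidRight a) (swapMidRight c) (swapMidRight b)

theorem swapMidRight_involutive : Function.Involutive swapMidRight := by
  intro T
  induction T with
  | L => rfl
  | N a b c ha hb hc => simp only [swapMidRight, ha, hb, hc]

theorem leaves_swapMidRight (T : TTree) : (swapMidRight T).leaves = T.leaves := by
  induction T with
  | L => rfl
  | N a b c ha hb hc => simp only [swapMidRight, leaves, ha, hb, hc]; omega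

theorem occursAtRoot_swapMidRight (t T : TTree) :
    occursAtRoot (swapMidRight t) (swapMidRight T) ↔ occursAtRoot t T := by
  induction t generalizing T with
  | L => simp only [swapMidRight, occursAtRoot]
  | N p q r hp hq hr =>
    cases T with
    | L => simp only [swapMidRight, occursAtRoot]
    | N a b c =>
      simp only [swapMidRight, occursAtRoot, hp, hq, hr]
      tauto

theorem contains_swapMidRight (t T : TTree) :
    contains (swapMidRight t) (swapMidRight T) ↔ contains t T := by
  induction T with
  | L => exact occursAtRoot_swapMidRight t .L
  | N a b c ha hb hc =>
    have hroot := occursAtRoot_swapMidRight t (.N a b c)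
    simp only [swapMidRight, contains] at hroot ⊢
    rw [hroot, ha, hb, hc]
    tauto

theorem avoids_swapMidRight (t T : TTree) :
    (swapMidRight T).avoids (swapMidRight t) ↔ T.avoids t :=
  (contains_swapMidRight t T).not

end TTree

open TTree in
theorem av_swapMidRight (t : TTree) (n : ℕ) : av (swapMidRight t) n = av t n := by
  have hset : {T : TTree | T.leaves = n ∧ T.avoids (swapMidRight t)}
      = swapMidRight '' {T : TTree | T.leaves = n ∧ T.avoids t} := by
    rw [swapMidRight_involutive.image_eq_preimage_symm]
    ext T
    change _ ∧ _ ↔ _ ∧ _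
    rw [leaves_swapMidRight, ← avoids_swapMidRight, swapMidRight_involutive]
  rw [av, av, hset, Set.ncard_image_of_injective _ swapMidRight_involutive.injective]

theorem swapMidRight_t74 : TTree.swapMidRight t74 = t75 := rfl

/-- The patterns `t74` and `t75` are Wilf equivalent. -/
theorem av_t74_eq_av_t75 (n : ℕ) : av t74 n = av t75 n := by
  rw [← swapMidRight_t74, av_swapMidRight]
end

section
/- For all n ≥ 0, av_{t75}(n) = av_{t76}(n), where t75 = N(N(L,L,N(L,L,L)),L,L) and t76 = N(L,N(N(L,L,L),L,L),L). -/
/-- the 7-leaf pattern `t76 = N(L,N(N(L,L,L),L,L),L)` -/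
def t76 : TTree := .N .L (.N (.N .L .L .L) .L .L) .L

namespace TTree

def rot : TTree → TTree
  | .L => .L
  | .N a b c => .N (rot c) (rot a) (rot b)

theorem rot_rot_rot (T : TTree) : rot (rot (rot T)) = T := by
  induction T with
  | L => rfl
  | N a b c ha hb hc => simp only [rot, ha, hb, hc]

theorem rot_bijective : Function.Bijective rot :=
  Function.bijective_iff_has_inverse.mpr
    ⟨fun T => rot (rot T), rot_rot_rot, rot_rot_rot⟩

theorem leaves_rot (T : TTree) : (rot T).leaves = T.leaves := by
  induction T with
  | L => rfl
  | N a b c ha hb hc => simp only [rot, leaves, ha, hb, hc]; ring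

theorem occursAtRoot_rot (t T : TTree) : occursAtRoot (rot t) (rot T) ↔ occursAtRoot t T := by
  induction t generalizing T with
  | L => simp [rot, occursAtRoot]
  | N p q r hp hq hr =>
    cases T with
    | L => simp [rot, occursAtRoot]
    | N a b c =>
      simp only [rot, occursAtRoot, hp, hq, hr]
      tauto

theorem contains_rot (t T : TTree) : contains (rot t) (rot T) ↔ contains t T := by
  induction T with
  | L => cases t <;> simp [rot, contains, occursAtRoot]
  | N a b c ha hb hc =>
    have hroot := occursAtRoot_rot t (.N a b c)
    simp only [rot, contains] at hroot ⊢
    rw [hroot, ha, hb, hc]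
    tauto

end TTree

open TTree in
theorem av_rot (t : TTree) (n : ℕ) : av (rot t) n = av t n := by
  have hpre : {T : TTree | T.leaves = n ∧ T.avoids t}
      = rot ⁻¹' {T | T.leaves = n ∧ T.avoids (rot t)} := by
    ext T
    simp only [Set.mem_ofPred_eq, Set.mem_preimage, avoids, leaves_rot, contains_rot]
  rw [av, av, hpre, Set.ncard_preimage_of_injective_subset_range rot_bijective.injective
    (by rw [rot_bijective.surjective.range_eq]; exact Set.subset_univ _)]

theorem TTree.rot_t75 : TTree.rot t75 = t76 := rfl

/-- The patterns `t75` and `t76` are Wilf equivalent. -/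
theorem av_t75_eq_av_t76 (n : ℕ) : av t75 n = av t76 n := by
  rw [← TTree.rot_t75, av_rot]
end

section
/- Let m ≥ 2. The map W sending an m-ary tree T to its word set — the set of all words over the alphabet {1,…,m} recording the sequence of child-indices along the path from the root to each m-leaf parent of T — is a bijection from the set of all m-ary trees onto the set of all finite prefix-free sets of words over {1,…,m} (where a set of words is prefix-free if no word in it is a proper prefix of another word in it). In particular, an ordered m-ary tree is uniquely determined by the set of paths from its root to its m-leaf parents. -/
/-!
The word set of `node cs` is `{[]}` when all children are leaves and otherwise the union of the
word sets of the `cs i` prefixed by `i`; as only `leaf` has an empty word set, this recovers the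
subtrees, giving injectivity. Conversely a prefix-free set containing `[]` is `{[]}`, and one
that does not splits by first letter into the prefix-free sets `{w | i :: w ∈ S}` of shorter
words, from which a tree is built by induction on the maximal word length.
-/

inductive MTree (m : ℕ) : Type
  | leaf : MTree m
  | node : (Fin m → MTree m) → MTree m

namespace MTree

variable {m : ℕ}

/-- the word set of an `m`-ary tree: the set of words over `{1,…,m}` recording
the child-indices along the path from the root to each `m`-leaf parent
(an internal vertex all of whose children are leaves) -/
def wordSet : MTree m → Set (List (Fin m))
  | .leaf => ∅
  | .node cs =>
      {w | (w = [] ∧ ∀ i, cs i = MTree.leaf) ∨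
        ∃ i w', w = i :: w' ∧ w' ∈ wordSet (cs i)}

end MTree

/-- a set of words is prefix-free if no word in it is a proper prefix of
another word in it -/
def PrefixFree {α : Type*} (S : Set (List α)) : Prop :=
  ∀ u ∈ S, ∀ v ∈ S, u <+: v → u = v

namespace PrefixFree

variable {α : Type*} {S : Set (List α)}

theorem eq_singleton_nil (hS : PrefixFree S) (hnil : [] ∈ S) : S = {[]} :=
  Set.eq_singleton_iff_unique_mem.mpr
    ⟨hnil, fun v hv => (hS [] hnil v hv List.nil_prefix).symm⟩

theorem cons_preimage (hS : PrefixFree S) (a : α) : PrefixFree {w | a :: w ∈ S} :=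
  fun _ hu _ hv huv => List.cons_injective (hS _ hu _ hv (List.cons_prefix_cons.mpr ⟨rfl, huv⟩))

end PrefixFree

namespace MTree

variable {m : ℕ}

@[simp]
theorem wordSet_leaf : wordSet (leaf : MTree m) = ∅ := rfl

@[simp]
theorem nil_mem_wordSet_node {cs : Fin m → MTree m} :
    [] ∈ wordSet (node cs) ↔ ∀ i, cs i = leaf := by
  simp [wordSet]

@[simp]
theorem cons_mem_wordSet_node {cs : Fin m → MTree m} {i : Fin m} {w : List (Fin m)} :
    i :: w ∈ wordSet (node cs) ↔ w ∈ wordSet (cs i) := by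
  simp [wordSet]

theorem wordSet_node_leaf : wordSet (node fun _ : Fin m => leaf) = {[]} := by
  ext (_ | ⟨i, w⟩) <;> simp

theorem wordSet_eq_empty_iff {T : MTree m} : wordSet T = ∅ ↔ T = leaf := by
  refine ⟨fun h => ?_, fun h => h ▸ rfl⟩
  induction T with
  | leaf => rfl
  | node cs ih =>
    have hS := Set.eq_empty_iff_forall_notMem.mp h
    have hleaves : ∀ i, cs i = leaf := fun i =>
      ih i (Set.eq_empty_of_forall_notMem fun w hw => hS _ (cons_mem_wordSet_node.mpr hw))
    exact (hS [] (nil_mem_wordSet_node.mpr hleaves)).elim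

theorem wordSet_finite (T : MTree m) : (wordSet T).Finite := by
  induction T with
  | leaf => exact Set.finite_empty
  | node cs ih =>
    refine ((Set.finite_iUnion fun i => (ih i).image (i :: ·)).insert []).subset ?_
    rintro (_ | ⟨i, w⟩) hw
    · exact Set.mem_insert _ _
    · exact Set.mem_insert_of_mem _ (Set.mem_iUnion.mpr ⟨i, w, cons_mem_wordSet_node.mp hw, rfl⟩)

theorem prefixFree_wordSet (T : MTree m) : PrefixFree (wordSet T) := by
  induction T with
  | leaf => simp [PrefixFree]
  | node cs ih =>
    rintro (_ | ⟨i, u⟩) hu (_ | ⟨j, v⟩) hv huv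
    · rfl
    · rw [cons_mem_wordSet_node, nil_mem_wordSet_node.mp hu j] at hv
      exact hv.elim
    · exact absurd (List.prefix_nil.mp huv) (List.cons_ne_nil _ _)
    · obtain ⟨rfl, huv'⟩ := List.cons_prefix_cons.mp huv
      rw [ih i u (cons_mem_wordSet_node.mp hu) v (cons_mem_wordSet_node.mp hv) huv']

theorem wordSet_injective : Function.Injective (wordSet (m := m)) := by
  intro T₁
  induction T₁ with
  | leaf => exact fun T₂ h => (wordSet_eq_empty_iff.mp h.symm).symm
  | node cs ih =>
    rintro (_ | cs₂) h
    · exact wordSet_eq_empty_iff.mp h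
    · exact congrArg node <| funext fun i => ih i <| Set.ext fun w => by
        rw [← cons_mem_wordSet_node, h, cons_mem_wordSet_node]

theorem wordSet_node_eq {cs : Fin m → MTree m} {S : Set (List (Fin m))}
    (hne : S.Nonempty) (hnil : [] ∉ S) (hcs : ∀ i, wordSet (cs i) = {w | i :: w ∈ S}) :
    wordSet (node cs) = S := by
  ext (_ | ⟨i, w⟩)
  · obtain ⟨_ | ⟨j, v⟩, hv⟩ := hne
    · exact absurd hv hnil
    have hj : cs j ≠ leaf := fun hj => by
      simpa [hj] using (hcs j).ge hv
    exact iff_of_false (fun h => hj (nil_mem_wordSet_node.mp h j)) hnil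
  · rw [cons_mem_wordSet_node, hcs i]
    rfl

theorem exists_wordSet_eq_of_length_lt (n : ℕ) {S : Set (List (Fin m))} (hS : PrefixFree S)
    (hlen : ∀ w ∈ S, w.length < n) : ∃ T : MTree m, wordSet T = S := by
  induction n generalizing S with
  | zero => exact ⟨leaf, (Set.eq_empty_of_forall_notMem fun w hw => by simpa using hlen w hw).symm⟩
  | succ n ih =>
    rcases S.eq_empty_or_nonempty with rfl | hne
    · exact ⟨leaf, rfl⟩
    by_cases hnil : [] ∈ S
    · exact ⟨node fun _ => leaf, by rw [wordSet_node_leaf, hS.eq_singleton_nil hnil]⟩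
    choose cs hcs using fun i : Fin m => ih (hS.cons_preimage i) fun w hw => by
      simpa using hlen _ hw
    exact ⟨node cs, wordSet_node_eq hne hnil hcs⟩

end MTree

theorem wordSet_bijOn_general {m : ℕ} :
    Set.BijOn (MTree.wordSet (m := m)) Set.univ
      {S : Set (List (Fin m)) | S.Finite ∧ PrefixFree S} := by
  refine ⟨fun T _ => ⟨T.wordSet_finite, T.prefixFree_wordSet⟩,
    MTree.wordSet_injective.injOn, ?_⟩
  rintro S ⟨hfin, hS⟩
  obtain ⟨N, hN⟩ := (hfin.image List.length).bddAbove
  obtain ⟨T, hT⟩ := MTree.exists_wordSet_eq_of_length_lt (N + 1) hS fun w hw =>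
    Nat.lt_succ_of_le (hN ⟨w, hw, rfl⟩)
  exact ⟨T, Set.mem_univ T, hT⟩

/-- For `m ≥ 2`, the word-set map is a bijection from the set of all `m`-ary
trees onto the set of all finite prefix-free sets of words over `{1,…,m}`;
in particular an `m`-ary tree is uniquely determined by its word set. -/
theorem wordSet_bijOn {m : ℕ} (hm : 2 ≤ m) :
    Set.BijOn (MTree.wordSet (m := m)) Set.univ
      {S : Set (List (Fin m)) | S.Finite ∧ PrefixFree S} :=
  wordSet_bijOn_general
end
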